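/- Let M and L be free abelian groups of rank n with dual bases {w_i} of M and {v_i} of L under a pairing χ: M × L → Z with χ(w_i, v_j) = δ_{ij}. Let φ: L → L and ψ: M → M be group isomorphisms given (for a fixed vertex k and nonnegative integers Q(i,j)) by ψ(w_i) = w_i for i≠k, ψ(w_k) = −w_k + Σ_j Q(k,j)·w_j, and φ(v_i) = v_i + Q(k,i)·v_k for i≠k, φ(v_k) = −v_k. Then χ(ψ(w), φ(v)) = χ(w, v) for all w ∈ M, v ∈ L. -/

import Mathlib

/-!
Both sides are bilinear in `(w, v)`, so it suffices to compare them on pairs of basis vectors.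
For `a ≠ k` the vector `ψ w_a = w_a` only sees the `a`-th coordinate of `φ v_b`, which mutation
leaves unchanged. For `a = k`, in `ψ w_k · φ v_b = (-w_k + Q(k,·)) · φ v_b` the two contributions
`∓ Q(k,b)` cancel when `b ≠ k`, while `ψ w_k · φ v_k = 1 - Q(k,k) = 1`.
-/

open Matrix

theorem dotProduct_map_eq_of_basis {R ι : Type*} [CommRing R] [Fintype ι] [DecidableEq ι]
    (ψ φ : (ι → R) →ₗ[R] (ι → R))
    (h : ∀ a b, ψ (Pi.single a 1) ⬝ᵥ φ (Pi.single b 1) = Pi.single a 1 ⬝ᵥ Pi.single b 1)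
    (w v : ι → R) : ψ w ⬝ᵥ φ v = w ⬝ᵥ v :=
  LinearMap.congr_fun₂ (LinearMap.ext_basis (Pi.basisFun R ι) (Pi.basisFun R ι)
    (B := (dotProductBilin R R).compl₁₂ ψ φ) (B' := dotProductBilin R R) (by simpa using h)) w v

theorem mutation_dotProduct_basis {R ι : Type*} [CommRing R] [Fintype ι] [DecidableEq ι]
    (Q : ι → ι → R) (k : ι) (hloop : Q k k = 0) (a b : ι) :
    (if a = k then -Pi.single k 1 + ∑ j, Q k j • Pi.single j 1 else Pi.single a 1) ⬝ᵥ
      (if b = k then -Pi.single k 1 else Pi.single b 1 + Q k b • Pi.single k 1)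
      = (Pi.single a 1 : ι → R) ⬝ᵥ Pi.single b 1 := by
  rw [← pi_eq_sum_univ' (Q k)]
  rcases eq_or_ne a k with rfl | ha
  · rcases eq_or_ne b a with rfl | hb
    · simp [hloop]
    · simp [hb, hloop, dotProduct_add]
  · by_cases hb : b = k
    · simp [hb, ha]
    · simp [hb, ha, Pi.single_apply]

theorem stmt6 {n : ℕ} (Q : Fin n → Fin n → ℕ) (k : Fin n) (hloop : Q k k = 0)
    (ψ φ : (Fin n → ℤ) →ₗ[ℤ] (Fin n → ℤ))
    (hψ : ∀ i, ψ (Pi.single i 1) =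
      if i = k then (-Pi.single k 1 + ∑ j, (Q k j : ℤ) • Pi.single j 1)
      else Pi.single i 1)
    (hφ : ∀ i, φ (Pi.single i 1) =
      if i = k then -Pi.single k 1
      else Pi.single i 1 + (Q k i : ℤ) • Pi.single k 1) :
    ∀ (w v : Fin n → ℤ), (∑ i, ψ w i * φ v i) = ∑ i, w i * v i :=
  dotProduct_map_eq_of_basis ψ φ fun a b => by
    rw [hψ, hφ]
    exact mutation_dotProduct_basis (fun i j => (Q i j : ℤ)) k (by simp [hloop]) a b
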